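/- arXiv:1901.01452 — 7 statements merged into one kernel-verified Lean document; each statement's English description precedes it below -/
import Mathlib

section
/- Let n ≥ 2 be a natural number with gcd(n, 6) = 1, let k be coprime to n, and let x = (↑(k/n) : 𝕋). Then the joint forward orbit O(x) = {2^i • (3^j • x) : i, j ∈ ℕ} is a finite invariant set which is minimal: every nonempty invariant subset of O(x) equals O(x). -/
open MeasureTheory

noncomputable section

/-- The circle `[0,1]` with endpoints identified. -/
abbrev 𝕋 := AddCircle (1 : ℝ)

instance : IsProbabilityMeasure (volume : Measure 𝕋) :=
  ⟨by simp [AddCircle.measure_univ]⟩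

/-- The doubling map. -/
def T (x : 𝕋) : 𝕋 := 2 • x

/-- The tripling map. -/
def S (x : 𝕋) : 𝕋 := 3 • x

/-- A set is invariant if it is forward invariant under both `T` and `S`. -/
def Invariant (O : Set 𝕋) : Prop := T '' O ⊆ O ∧ S '' O ⊆ O

/-- A nonempty finite invariant set is minimal if every nonempty invariant subset equals it. -/
def MinimalInvariant (O : Set 𝕋) : Prop :=
  O.Nonempty ∧ O.Finite ∧ Invariant O ∧
    ∀ O' ⊆ O, O'.Nonempty → Invariant O' → O' = O

/-- A measure is invariant if both `T` and `S` are measure preserving for it. -/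
def InvariantMeasure (μ : Measure 𝕋) : Prop :=
  MeasurePreserving T μ μ ∧ MeasurePreserving S μ μ

/-- The normalized counting measure on a set: each point of a finite set `O`
gets mass `1 / |O|`. -/
def normCount (O : Set 𝕋) : Measure 𝕋 :=
  (O.ncard : ENNReal)⁻¹ • Measure.count.restrict O

/-- `Fn n` is the set of points `i/n` of the circle with `0 < i < n`. -/
def Fn (n : ℕ) : Set 𝕋 := {x : 𝕋 | ∃ i : ℕ, 0 < i ∧ i < n ∧ x = ((i : ℝ) / n : ℝ)}

/-! Since `gcd(n, 6) = 1`, both `2` and `3` are units modulo `n`: by Euler, `2 ^ φ(n) ≡ 3 ^ φ(n) ≡ 1`.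
On the `n`-torsion of the circle the semigroup generated by `2` and `3` therefore acts through a
finite group, so from any point of the orbit one gets back to every other point, and every
nonempty invariant subset is all of the orbit. Finiteness holds because the orbit lies in the
finite `n`-torsion. -/

section AddMonoid

variable {G : Type*} [AddMonoid G]

def jointOrbit (x : G) : Set G :=
  {y | ∃ i j : ℕ, y = 2 ^ i • (3 ^ j • x)}

theorem jointOrbit_subset_jointOrbit_of_mem {n : ℕ} {x y : G}
    (hx : n • x = 0) (h6 : n.Coprime 6) (hy : y ∈ jointOrbit x) :
    jointOrbit x ⊆ jointOrbit y := by
  obtain ⟨a, b, rfl⟩ := hy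
  have hn : n ≠ 0 := by rintro rfl; norm_num at h6
  obtain ⟨d, hd⟩ : ∃ d, n.totient = d + 1 :=
    Nat.exists_eq_add_one_of_ne_zero (Nat.totient_pos.mpr (Nat.pos_of_ne_zero hn)).ne'
  have h2 : 2 ^ (d + 1) ≡ 1 [MOD n] :=
    hd ▸ Nat.ModEq.pow_totient (Nat.Coprime.coprime_dvd_right (by norm_num) h6).symm
  have h3 : 3 ^ (d + 1) ≡ 1 [MOD n] :=
    hd ▸ Nat.ModEq.pow_totient (Nat.Coprime.coprime_dvd_right (by norm_num) h6).symm
  rintro _ ⟨i, j, rfl⟩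
  -- `2 ^ (a * d)` undoes `2 ^ a` on `x` because `2 ^ (d + 1) ≡ 1`; likewise for `3`.
  refine ⟨i + a * d, j + b * d, ?_⟩
  simp only [← mul_nsmul']
  refine nsmul_eq_nsmul_of_modEq ?_ hx
  calc 2 ^ i * 3 ^ j
      = 2 ^ i * 1 ^ a * (3 ^ j * 1 ^ b) := by ring
    _ ≡ 2 ^ i * (2 ^ (d + 1)) ^ a * (3 ^ j * (3 ^ (d + 1)) ^ b) [MOD n] :=
        ((Nat.ModEq.refl _).mul (h2.pow a).symm).mul ((Nat.ModEq.refl _).mul (h3.pow b).symm)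
    _ = 2 ^ (i + a * d) * (3 ^ (j + b * d) * (2 ^ a * 3 ^ b)) := by ring

theorem jointOrbit_subset_torsion {n : ℕ} {x : G} (hx : n • x = 0) :
    jointOrbit x ⊆ {y | n • y = 0} := by
  rintro _ ⟨i, j, rfl⟩
  simp only [Set.mem_ofPred_eq, smul_comm n, hx, smul_zero]

end AddMonoid

theorem invariant_jointOrbit (x : 𝕋) : Invariant (jointOrbit x) := by
  constructor
  · rintro _ ⟨_, ⟨i, j, rfl⟩, rfl⟩
    exact ⟨i + 1, j, by rw [T, pow_succ', mul_nsmul']⟩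
  · rintro _ ⟨_, ⟨i, j, rfl⟩, rfl⟩
    exact ⟨i, j + 1, by rw [S, smul_comm, pow_succ', mul_nsmul']⟩

theorem Invariant.jointOrbit_subset {O : Set 𝕋} (hO : Invariant O) {y : 𝕋} (hy : y ∈ O) :
    jointOrbit y ⊆ O := by
  have h3 : ∀ j : ℕ, 3 ^ j • y ∈ O := by
    intro j
    induction j with
    | zero => simpa using hy
    | succ j ih =>
      rw [pow_succ', mul_nsmul']
      exact hO.2 ⟨_, ih, rfl⟩
  rintro _ ⟨i, j, rfl⟩
  induction i with
  | zero => simpa using h3 j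
  | succ i ih =>
    rw [pow_succ', mul_nsmul']
    exact hO.1 ⟨_, ih, rfl⟩

theorem nsmul_coe_div_self_eq_zero (n k : ℕ) (hn : n ≠ 0) :
    n • (((k : ℝ) / n : ℝ) : 𝕋) = 0 := by
  rw [← AddCircle.coe_nsmul, nsmul_eq_mul, mul_div_cancel₀ _ (Nat.cast_ne_zero.mpr hn),
    ← nsmul_one, AddCircle.coe_nsmul, AddCircle.coe_period, smul_zero]

theorem orbit_of_fraction_minimal_general (n k : ℕ) (h6 : Nat.gcd n 6 = 1)
    (x : 𝕋) (hx : x = ((k : ℝ) / (n : ℝ) : ℝ))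
    (O : Set 𝕋) (hO : O = {y : 𝕋 | ∃ i j : ℕ, y = 2 ^ i • (3 ^ j • x)}) :
    O.Finite ∧ Invariant O ∧ ∀ O' ⊆ O, O'.Nonempty → Invariant O' → O' = O := by
  have hn : n ≠ 0 := by rintro rfl; norm_num at h6
  have htors : n • x = 0 := hx ▸ nsmul_coe_div_self_eq_zero n k hn
  change O = jointOrbit x at hO
  subst hO
  refine ⟨(AddCircle.finite_torsion 1 (Nat.pos_of_ne_zero hn)).subset
    (jointOrbit_subset_torsion htors), invariant_jointOrbit x, ?_⟩
  rintro O' hsub ⟨y, hy⟩ hinv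
  exact hsub.antisymm
    ((jointOrbit_subset_jointOrbit_of_mem htors h6 (hsub hy)).trans (hinv.jointOrbit_subset hy))

/-- For `n ≥ 2` coprime with `6` and `k` coprime with `n`, the joint forward orbit of
`k/n` under multiplication by `2` and `3` is a finite, invariant, minimal set. -/
theorem orbit_of_fraction_minimal (n k : ℕ) (hn : 2 ≤ n) (h6 : Nat.gcd n 6 = 1)
    (hk : Nat.Coprime k n) (x : 𝕋) (hx : x = ((k : ℝ) / (n : ℝ) : ℝ))
    (O : Set 𝕋) (hO : O = {y : 𝕋 | ∃ i j : ℕ, y = 2 ^ i • (3 ^ j • x)}) :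
    O.Finite ∧ Invariant O ∧ ∀ O' ⊆ O, O'.Nonempty → Invariant O' → O' = O :=
  orbit_of_fraction_minimal_general n k h6 x hx O hO
end
end

section
/- Let O ⊆ 𝕋 be a nonempty finite minimal invariant set. Then the normalized counting measure on O is an invariant probability measure, and it is the unique invariant probability measure μ on 𝕋 with μ(O) = 1. -/
open MeasureTheory

noncomputable section

/-! Since `T` and `S` commute, `T '' O` and `S '' O` are nonempty invariant subsets of `O`, so
minimality forces both maps to permute the finite set `O`; hence the counting measure on `O` is
invariant. Conversely, an invariant `μ` with `μ O = 1` satisfies `μ {T x} = μ {x} = μ {S x}` for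
`x ∈ O`, so every level set of `x ↦ μ {x}` in `O` is invariant, and minimality makes the point
masses constant on `O`. -/

open Set Function
open scoped ENNReal

namespace MeasureTheory

variable {α : Type*} [MeasurableSpace α]

theorem measurePreserving_count_restrict {f : α → α} {s : Set α} (hf : Measurable f)
    (hs : MeasurableSet s) (h : BijOn f s s) :
    MeasurePreserving f (Measure.count.restrict s) (Measure.count.restrict s) := by
  refine ⟨hf, Measure.ext fun A hA => ?_⟩
  rw [Measure.map_apply hf hA, Measure.restrict_apply (hf hA), Measure.restrict_apply hA,
    Measure.count_apply ((hf hA).inter hs), Measure.count_apply (hA.inter hs),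
    ← (h.injOn.mono inter_subset_right).encard_image, image_preimage_inter, h.image_eq]

variable [MeasurableSingletonClass α] {μ : Measure α} {s : Set α}

theorem MeasurePreserving.measure_singleton_image {f : α → α} (hf : MeasurePreserving f μ μ)
    (hμ : μ sᶜ = 0) (hinj : InjOn f s) {x : α} (hx : x ∈ s) : μ {f x} = μ {x} := by
  have hfiber : f ⁻¹' {f x} ∩ s = {x} :=
    Subset.antisymm (fun y hy => hinj hy.2 hx hy.1) (singleton_subset_iff.2 ⟨rfl, hx⟩)
  rw [← hf.measure_preimage (measurableSet_singleton _).nullMeasurableSet,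
    ← measure_inter_conull hμ, hfiber]

theorem Measure.count_eq_ncard {s : Set α} (hs : s.Finite) :
    Measure.count s = s.ncard := by
  rw [Measure.count_apply_finite s hs, ncard_eq_toFinset_card s hs]

theorem Measure.eq_smul_count_restrict_of_measure_singleton {c : ℝ≥0∞} (hs : s.Finite)
    (hμ : μ sᶜ = 0) (hc : ∀ x ∈ s, μ {x} = c) : μ = c • Measure.count.restrict s := by
  refine Measure.ext fun A hA => ?_
  have hAs : (A ∩ s).Finite := hs.subset inter_subset_right
  calc μ A = μ (A ∩ s) := (measure_inter_conull hμ).symm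
    _ = ∑ x ∈ hAs.toFinset, μ {x} := by rw [sum_measure_singleton, hAs.coe_toFinset]
    _ = ∑ _x ∈ hAs.toFinset, c := Finset.sum_congr rfl fun x hx => hc x (hAs.mem_toFinset.1 hx).2
    _ = (c • Measure.count.restrict s) A := by
      rw [Finset.sum_const, nsmul_eq_mul, Measure.smul_apply, Measure.restrict_apply hA,
        Measure.count_apply_finite _ hAs, smul_eq_mul, mul_comm]

end MeasureTheory

theorem measurable_T : Measurable T := (continuous_nsmul 2).measurable

theorem measurable_S : Measurable S := (continuous_nsmul 3).measurable

theorem commute_T_S : Function.Commute T S := fun x => smul_comm 2 3 x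

variable {O : Set 𝕋}

theorem Invariant.image_T (h : Invariant O) : Invariant (T '' O) :=
  ⟨image_mono h.1, (commute_T_S.set_image O).symm.subset.trans (image_mono h.2)⟩

theorem Invariant.image_S (h : Invariant O) : Invariant (S '' O) :=
  ⟨(commute_T_S.set_image O).subset.trans (image_mono h.1), image_mono h.2⟩

namespace MinimalInvariant

theorem bijOn_T (hO : MinimalInvariant O) : BijOn T O O := by
  obtain ⟨hne, hfin, hinv, hmin⟩ := hO
  exact (hfin.surjOn_iff_bijOn_of_mapsTo (mapsTo_iff_image_subset.2 hinv.1)).1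
    (hmin _ hinv.1 (hne.image T) hinv.image_T).symm.subset

theorem bijOn_S (hO : MinimalInvariant O) : BijOn S O O := by
  obtain ⟨hne, hfin, hinv, hmin⟩ := hO
  exact (hfin.surjOn_iff_bijOn_of_mapsTo (mapsTo_iff_image_subset.2 hinv.2)).1
    (hmin _ hinv.2 (hne.image S) hinv.image_S).symm.subset

theorem apply_eq_apply_of_invariant (hO : MinimalInvariant O) {β : Type*} {g : 𝕋 → β}
    (hT : ∀ x ∈ O, g (T x) = g x) (hS : ∀ x ∈ O, g (S x) = g x) {x y : 𝕋} (hx : x ∈ O) (hy : y ∈ O) : g y = g x := by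
  obtain ⟨-, -, hinv, hmin⟩ := hO
  have hlevel : {y ∈ O | g y = g x} = O := by
    refine hmin _ (sep_subset _ _) ⟨x, hx, rfl⟩ ⟨?_, ?_⟩
    · rintro _ ⟨y, ⟨hy, hgy⟩, rfl⟩
      exact ⟨hinv.1 (mem_image_of_mem T hy), (hT y hy).trans hgy⟩
    · rintro _ ⟨y, ⟨hy, hgy⟩, rfl⟩
      exact ⟨hinv.2 (mem_image_of_mem S hy), (hS y hy).trans hgy⟩
  exact (hlevel.symm.subset hy).2

end MinimalInvariant

theorem normCount_eq_smul_count_restrict (O : Set 𝕋) :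
    normCount O = (O.ncard : ℝ≥0∞)⁻¹ • Measure.count.restrict O := rfl

theorem isProbabilityMeasure_normCount (hne : O.Nonempty) (hfin : O.Finite) :
    IsProbabilityMeasure (normCount O) := by
  constructor
  rw [normCount_eq_smul_count_restrict, Measure.smul_apply, Measure.restrict_apply_univ,
    Measure.count_eq_ncard hfin, smul_eq_mul, ENNReal.inv_mul_cancel _ (ENNReal.natCast_ne_top _)]
  exact_mod_cast ((ncard_pos hfin).2 hne).ne'

theorem measurePreserving_normCount {f : 𝕋 → 𝕋} (hf : Measurable f) (hfin : O.Finite)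
    (h : BijOn f O O) : MeasurePreserving f (normCount O) (normCount O) :=
  (measurePreserving_count_restrict hf hfin.measurableSet h).smul_measure _

/-- The normalized counting measure on a nonempty finite minimal invariant set `O` is an
invariant probability measure, and is the unique invariant probability measure giving
`O` full mass. -/
theorem normCount_unique_invariant (O : Set 𝕋) (hO : MinimalInvariant O) :
    IsProbabilityMeasure (normCount O) ∧ InvariantMeasure (normCount O) ∧
    ∀ μ : Measure 𝕋, IsProbabilityMeasure μ → InvariantMeasure μ → μ O = 1 →
      μ = normCount O := by
  have hfin : O.Finite := hO.2.1
  refine ⟨isProbabilityMeasure_normCount hO.1 hfin,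
    ⟨measurePreserving_normCount measurable_T hfin hO.bijOn_T,
      measurePreserving_normCount measurable_S hfin hO.bijOn_S⟩, fun μ _ hμ hμO => ?_⟩
  obtain ⟨x₀, hx₀⟩ := hO.1
  have hconc : μ Oᶜ = 0 := (prob_compl_eq_zero_iff hfin.measurableSet).2 hμO
  have hconst : ∀ y ∈ O, μ {y} = μ {x₀} := fun y hy =>
    hO.apply_eq_apply_of_invariant (g := fun x => μ {x})
      (fun _ hx => hμ.1.measure_singleton_image hconc hO.bijOn_T.injOn hx)
      (fun _ hx => hμ.2.measure_singleton_image hconc hO.bijOn_S.injOn hx) hx₀ hy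
  have hμ_eq := Measure.eq_smul_count_restrict_of_measure_singleton hfin hconc hconst
  have hmass : μ {x₀} = (O.ncard : ℝ≥0∞)⁻¹ := by
    refine ENNReal.eq_inv_of_mul_eq_one_left ?_
    calc μ {x₀} * O.ncard = (μ {x₀} • Measure.count.restrict O) univ := by
          rw [Measure.smul_apply, Measure.restrict_apply_univ, Measure.count_eq_ncard hfin,
            smul_eq_mul]
      _ = 1 := by rw [← hμ_eq, measure_univ]
  rw [hμ_eq, hmass, normCount_eq_smul_count_restrict]
end
end

section
/- The Haar measure λ is an extreme point of the set of invariant probability measures on 𝕋: if λ = α • μ₁ + (1 − α) • μ₂ where 0 < α < 1 and μ₁, μ₂ are invariant probability measures on 𝕋, then μ₁ = λ and μ₂ = λ. -/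
open MeasureTheory

noncomputable section

/- The doubling map is ergodic for Haar measure, and an ergodic measure is an extreme point of
the invariant probability measures of its map; a fortiori of the smaller set of measures invariant
under both the doubling and the tripling map. -/

/-- The Haar measure is an extreme point of the set of invariant probability measures:
any representation of it as a nontrivial convex combination of invariant probability
measures is trivial. -/
theorem haar_extreme_point (α : ENNReal) (hα0 : 0 < α) (hα1 : α < 1)
    (μ₁ μ₂ : Measure 𝕋) [IsProbabilityMeasure μ₁] [IsProbabilityMeasure μ₂]
    (h₁ : InvariantMeasure μ₁) (h₂ : InvariantMeasure μ₂)
    (h : (volume : Measure 𝕋) = α • μ₁ + (1 - α) • μ₂) :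
    μ₁ = volume ∧ μ₂ = volume := by
  have hT : Ergodic T (volume : Measure 𝕋) := AddCircle.ergodic_nsmul (by norm_num)
  have hsegment : (volume : Measure 𝕋) ∈ openSegment ENNReal μ₁ μ₂ :=
    ⟨α, 1 - α, hα0, tsub_pos_of_lt hα1, add_tsub_cancel_of_le hα1.le, h.symm⟩
  exact (_root_.mem_extremePoints.1 hT.mem_extremePoints).2 μ₁ ⟨h₁.1, inferInstance⟩ μ₂
    ⟨h₂.1, inferInstance⟩ hsegment
end
end

section
/- If O ⊆ 𝕋 is a nonempty finite minimal invariant set, then all elements of O have the same additive order: for all x, y ∈ O, addOrderOf x = addOrderOf y. -/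
open MeasureTheory

noncomputable section

/- Multiplying by an integer can only shrink the additive order, so the points of `O` whose order
divides a fixed `m` form an invariant subset; by minimality it is all of `O` as soon as it is
nonempty. -/
theorem Invariant.sep_addOrderOf_dvd {O : Set 𝕋} (hO : Invariant O) (m : ℕ) :
    Invariant {z ∈ O | addOrderOf z ∣ m} := by
  constructor
  · rintro _ ⟨z, hz, rfl⟩
    exact ⟨hO.1 ⟨z, hz.1, rfl⟩, (addOrderOf_smul_dvd 2).trans hz.2⟩
  · rintro _ ⟨z, hz, rfl⟩
    exact ⟨hO.2 ⟨z, hz.1, rfl⟩, (addOrderOf_smul_dvd 3).trans hz.2⟩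

theorem MinimalInvariant.addOrderOf_dvd {O : Set 𝕋} (hO : MinimalInvariant O) {x y : 𝕋}
    (hx : x ∈ O) (hy : y ∈ O) : addOrderOf y ∣ addOrderOf x := by
  obtain ⟨-, -, hinv, hmin⟩ := hO
  have hall : {z ∈ O | addOrderOf z ∣ addOrderOf x} = O :=
    hmin _ (Set.sep_subset _ _) ⟨x, hx, dvd_rfl⟩ (hinv.sep_addOrderOf_dvd _)
  exact (hall.symm ▸ hy : y ∈ {z ∈ O | addOrderOf z ∣ addOrderOf x}).2

/-- All elements of a nonempty finite minimal invariant set have the same additive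
order. -/
theorem minimal_orbit_same_order (O : Set 𝕋) (hO : MinimalInvariant O) :
    ∀ x ∈ O, ∀ y ∈ O, addOrderOf x = addOrderOf y := by
  intro x hx y hy
  exact Nat.dvd_antisymm (hO.addOrderOf_dvd hy hx) (hO.addOrderOf_dvd hx hy)
end
end

section
/- If O ⊆ 𝕋 is a nonempty finite minimal invariant set, then every x ∈ O has finite additive order, and this order is coprime to 6 (i.e. gcd(addOrderOf x, 6) = 1). In other words, every point of a finite minimal orbit is a rational point whose reduced denominator is divisible by neither 2 nor 3. -/
open MeasureTheory

noncomputable section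

open Set

/-!
Since `O` is finite and closed under doubling, every point of it has finite order. Multiplying
by `p ∈ {2, 3}` divides the order by `p` when `p` divides it, and preserves orders coprime
to `6`; hence the points of `O` whose order is coprime to `6` form a nonempty invariant subset,
which by minimality is all of `O`.
-/

theorem isOfFinAddOrder_of_mapsTo_nsmul {G : Type*} [AddLeftCancelMonoid G] {s : Set G}
    (hs : s.Finite) {k : ℕ} (hk : 1 < k) (hmaps : MapsTo (k • ·) s s) {x : G} (hx : x ∈ s) :
    IsOfFinAddOrder x := by
  have hmem : ∀ a : ℕ, (k ^ a) • x ∈ s := fun a => by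
    induction a with
    | zero => simpa using hx
    | succ a ih => rw [pow_succ', mul_nsmul']; exact hmaps ih
  obtain ⟨a, b, hab, heq⟩ := hs.exists_lt_map_eq_of_forall_mem hmem
  refine not_not.1 fun hinf => ?_
  exact (Nat.pow_lt_pow_right hk hab).ne (injective_nsmul_iff_not_isOfFinAddOrder.2 hinf heq)

theorem Set.MapsTo.sep_addOrderOf_coprime {G : Type*} [AddMonoid G] {s : Set G} {k m : ℕ}
    (hmaps : MapsTo (k • ·) s s) (hk : k ∣ m) :
    MapsTo (k • ·) {x ∈ s | (addOrderOf x).Coprime m} {x ∈ s | (addOrderOf x).Coprime m} :=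
  fun x ⟨hx, hcop⟩ => ⟨hmaps hx, by rwa [(hcop.coprime_dvd_right hk).addOrderOf_nsmul]⟩

theorem exists_mem_addOrderOf_coprime_six {G : Type*} [AddMonoid G] {s : Set G}
    (h2 : MapsTo (2 • ·) s s) (h3 : MapsTo (3 • ·) s s) {x : G} (hx : x ∈ s)
    (hfin : IsOfFinAddOrder x) : ∃ y ∈ s, (addOrderOf y).Coprime 6 := by
  induction hn : addOrderOf x using Nat.strong_induction_on generalizing x with
  | _ n ih =>
    have hpos : 0 < n := hn ▸ hfin.addOrderOf_pos
    have descend : ∀ p, 1 < p → MapsTo (p • ·) s s → p ∣ n → ∃ y ∈ s, (addOrderOf y).Coprime 6 :=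
      fun p hp hmaps hpn => ih (n / p) (Nat.div_lt_self hpos hp) (hmaps hx) hfin.nsmul
        (by rw [addOrderOf_nsmul_of_dvd (by omega) (hn ▸ hpn), hn])
    by_cases h2n : 2 ∣ n
    · exact descend 2 one_lt_two h2 h2n
    by_cases h3n : 3 ∣ n
    · exact descend 3 (by norm_num) h3 h3n
    refine ⟨x, hx, hn ▸ (Nat.coprime_mul_iff_right.2 ⟨?_, ?_⟩ : n.Coprime (2 * 3))⟩
    · exact Nat.coprime_comm.1 (Nat.prime_two.coprime_iff_not_dvd.2 h2n)
    · exact Nat.coprime_comm.1 (Nat.prime_three.coprime_iff_not_dvd.2 h3n)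

theorem invariant_iff_mapsTo {O : Set 𝕋} :
    Invariant O ↔ MapsTo (2 • ·) O O ∧ MapsTo (3 • ·) O O := by
  simp only [Invariant, mapsTo_iff_image_subset]
  rfl

/-- Every point of a nonempty finite minimal invariant set has finite additive order,
coprime to `6`. -/
theorem minimal_orbit_order_coprime_six (O : Set 𝕋) (hO : MinimalInvariant O) :
    ∀ x ∈ O, IsOfFinAddOrder x ∧ Nat.gcd (addOrderOf x) 6 = 1 := by
  obtain ⟨⟨x₀, hx₀⟩, hfin, hinv, hmin⟩ := hO
  obtain ⟨h2, h3⟩ := invariant_iff_mapsTo.1 hinv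
  have hfinOrder : ∀ x ∈ O, IsOfFinAddOrder x := fun x hx =>
    isOfFinAddOrder_of_mapsTo_nsmul hfin one_lt_two h2 hx
  have hcoprime : {x ∈ O | (addOrderOf x).Coprime 6} = O :=
    hmin _ (sep_subset _ _)
      (exists_mem_addOrderOf_coprime_six h2 h3 hx₀ (hfinOrder x₀ hx₀))
      (invariant_iff_mapsTo.2
        ⟨h2.sep_addOrderOf_coprime (by norm_num), h3.sep_addOrderOf_coprime (by norm_num)⟩)
  intro x hx
  rw [← hcoprime] at hx
  exact ⟨hfinOrder x hx.1, hx.2⟩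
end
end

section
/- The set O₁ = {↑(1/23), ↑(2/23), ↑(3/23), ↑(4/23), ↑(6/23), ↑(8/23), ↑(9/23), ↑(12/23), ↑(13/23), ↑(16/23), ↑(18/23)} ⊆ 𝕋 is a minimal invariant set; its image under negation O₂ = -O₁ is also a minimal invariant set; O₁ and O₂ are disjoint; and O₁ ∪ O₂ = F₂₃ = {(↑(i/23) : 𝕋) : 0 < i < 23}. In particular F₂₃ decomposes into exactly two minimal invariant sets. -/
open MeasureTheory

noncomputable section

/-- The first of the two minimal invariant subsets of `F₂₃`. -/
def O₁ : Set 𝕋 :=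
  {((1 / 23 : ℝ) : 𝕋), ((2 / 23 : ℝ) : 𝕋), ((3 / 23 : ℝ) : 𝕋), ((4 / 23 : ℝ) : 𝕋),
   ((6 / 23 : ℝ) : 𝕋), ((8 / 23 : ℝ) : 𝕋), ((9 / 23 : ℝ) : 𝕋), ((12 / 23 : ℝ) : 𝕋),
   ((13 / 23 : ℝ) : 𝕋), ((16 / 23 : ℝ) : 𝕋), ((18 / 23 : ℝ) : 𝕋)}

/- ### Auxiliary material -/

lemma coe_add_nat' (x : ℝ) (n : ℕ) : ((x + n : ℝ) : 𝕋) = x := by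
  rw [QuotientAddGroup.eq_iff_sub_mem]; exact ⟨(n:ℤ), by simp⟩

/-- Embedding of `ZMod 23` into the circle. -/
def f23 (i : ZMod 23) : 𝕋 := (((i.val : ℝ) / 23 : ℝ) : 𝕋)

lemma f23_natCast (a : ℕ) : (((a : ℝ) / 23 : ℝ) : 𝕋) = f23 (a : ZMod 23) := by
  unfold f23
  rw [ZMod.val_natCast]
  have h0 : (a : ℝ) = ((a % 23 : ℕ) : ℝ) + 23 * ((a / 23 : ℕ) : ℝ) := by
    exact_mod_cast (Nat.mod_add_div a 23).symm
  have h : (a : ℝ) / 23 = ((a % 23 : ℕ) : ℝ) / 23 + ((a / 23 : ℕ) : ℝ) := by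
    rw [h0]; ring
  rw [h, coe_add_nat']

lemma f23_mem_Ico (i : ZMod 23) : ((i.val : ℝ)/23) ∈ Set.Ico (0:ℝ) (0+1) := by
  constructor
  · positivity
  · rw [zero_add, div_lt_one (by norm_num)]
    exact_mod_cast ZMod.val_lt i

lemma f23_inj : Function.Injective f23 := by
  intro i j h
  unfold f23 at h
  rw [AddCircle.coe_eq_coe_iff_of_mem_Ico (p := 1) (a := 0) (f23_mem_Ico i) (f23_mem_Ico j)] at h
  have : i.val = j.val := by
    have h2 : (i.val:ℝ) = j.val := by linarith
    exact_mod_cast h2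
  exact ZMod.val_injective _ this

lemma f23_nsmul (k : ℕ) (i : ZMod 23) : k • f23 i = f23 ((k : ZMod 23) * i) := by
  unfold f23
  have h1 : (k : ℕ) • (((i.val : ℝ)/23 : ℝ) : 𝕋) = (((k * i.val : ℕ) : ℝ)/23 : ℝ) := by
    rw [← AddCircle.coe_nsmul]
    push_cast
    ring_nf
  rw [h1, f23_natCast]
  congr 1
  push_cast
  rw [ZMod.natCast_val, ZMod.cast_id]

lemma f23_neg (i : ZMod 23) : -(f23 i) = f23 (-i) := by
  by_cases h : i = 0
  · subst h
    have h0 : f23 0 = ((0:ℝ):𝕋) := by unfold f23; norm_num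
    simp [h0]
  · unfold f23
    have hv : (-i).val = 23 - i.val := by
      rw [ZMod.neg_val]; simp [h]
    rw [hv]
    have hle : i.val ≤ 23 := le_of_lt (ZMod.val_lt i)
    have h0 : ((23 - i.val : ℕ) : ℝ) = 23 - (i.val : ℝ) := by
      push_cast [hle]; ring
    have h1 : ((23 - i.val : ℕ) : ℝ) / 23 = -((i.val:ℝ)/23) + ((1:ℕ) : ℝ) := by
      rw [h0]; push_cast; ring
    rw [h1, coe_add_nat', ← QuotientAddGroup.mk_neg]

lemma T_f23 (i : ZMod 23) : T (f23 i) = f23 (2 * i) := by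
  have := f23_nsmul 2 i
  unfold T
  rw [this]
  norm_num

lemma S_f23 (i : ZMod 23) : S (f23 i) = f23 (3 * i) := by
  have := f23_nsmul 3 i
  unfold S
  rw [this]
  norm_num

/-- The residues of `O₁`. -/
def A23 : Finset (ZMod 23) := {1,2,3,4,6,8,9,12,13,16,18}

/-- The residues of `-O₁`. -/
def N23 : Finset (ZMod 23) := {5,7,10,11,14,15,17,19,20,21,22}

lemma orbit_mem (O : Set 𝕋) (hinv : Invariant O) (i : ZMod 23) (hi : f23 i ∈ O) (k : ℕ) :
    f23 (2^k * i) ∈ O := by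
  induction k with
  | zero => simpa using hi
  | succ k ih =>
      have h : f23 (2^(k+1) * i) = T (f23 (2^k * i)) := by rw [T_f23]; ring_nf
      rw [h]; exact hinv.1 ⟨_, ih, rfl⟩

lemma invariant_of (D : Finset (ZMod 23)) (h2 : ∀ i ∈ D, 2*i ∈ D) (h3 : ∀ i ∈ D, 3*i ∈ D) :
    Invariant (f23 '' ↑D) := by
  constructor
  · rintro _ ⟨_, ⟨i, hi, rfl⟩, rfl⟩
    exact ⟨2*i, h2 i hi, (T_f23 i).symm⟩
  · rintro _ ⟨_, ⟨i, hi, rfl⟩, rfl⟩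
    exact ⟨3*i, h3 i hi, (S_f23 i).symm⟩

lemma subset_of_mem (D : Finset (ZMod 23))
    (htr : ∀ i ∈ D, ∀ j ∈ D, ∃ k ∈ Finset.range 11, 2^k * i = j)
    (O : Set 𝕋) (hinv : Invariant O) (i : ZMod 23) (hiD : i ∈ D) (hi : f23 i ∈ O) :
    f23 '' ↑D ⊆ O := by
  rintro _ ⟨j, hj, rfl⟩
  obtain ⟨k, -, hk⟩ := htr i hiD j hj
  rw [← hk]
  exact orbit_mem O hinv i hi k

lemma minimal_of (D : Finset (ZMod 23)) (hne : D.Nonempty)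
    (h2 : ∀ i ∈ D, 2*i ∈ D) (h3 : ∀ i ∈ D, 3*i ∈ D)
    (htr : ∀ i ∈ D, ∀ j ∈ D, ∃ k ∈ Finset.range 11, 2^k * i = j) :
    MinimalInvariant (f23 '' ↑D) := by
  refine ⟨⟨f23 hne.choose, ⟨hne.choose, hne.choose_spec, rfl⟩⟩,
    (D.finite_toSet).image f23, invariant_of D h2 h3, ?_⟩
  intro O' hsub ⟨x, hx⟩ hinv'
  obtain ⟨i, hiD, rfl⟩ := hsub hx
  exact le_antisymm hsub (subset_of_mem D htr O' hinv' i hiD hx)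

lemma O₁_eq : O₁ = f23 '' ↑A23 := by
  have e : ∀ n : ℕ, (((n:ℝ)/23 : ℝ):𝕋) = f23 (n : ZMod 23) := f23_natCast
  have e1 := e 1; have e2 := e 2; have e3 := e 3; have e4 := e 4
  have e6 := e 6; have e8 := e 8; have e9 := e 9; have e12 := e 12
  have e13 := e 13; have e16 := e 16; have e18 := e 18
  norm_num at e1 e2 e3 e4 e6 e8 e9 e12 e13 e16 e18
  unfold O₁ A23
  rw [e1, e2, e3, e4, e6, e8, e9, e12, e13, e16, e18]
  simp [Finset.coe_insert, Set.image_insert_eq]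

lemma negA23 : ∀ i ∈ A23, -i ∈ N23 := by decide

lemma negN23 : ∀ j ∈ N23, -j ∈ A23 := by decide

lemma mem_A_or_N : ∀ j : ZMod 23, j ≠ 0 → j ∈ A23 ∨ j ∈ N23 := by decide

lemma A23_ne_zero : ∀ j ∈ A23, j ≠ 0 := by decide

lemma N23_ne_zero : ∀ j ∈ N23, j ≠ 0 := by decide

lemma A23_not_N23 : ∀ i ∈ A23, i ∉ N23 := by decide

lemma negO₁_eq : -O₁ = f23 '' ↑N23 := by
  rw [O₁_eq]
  ext x
  simp only [Set.mem_neg, Set.mem_image, Finset.mem_coe]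
  constructor
  · rintro ⟨i, hi, hx⟩
    refine ⟨-i, negA23 i hi, ?_⟩
    rw [← f23_neg, hx, neg_neg]
  · rintro ⟨j, hj, rfl⟩
    refine ⟨-j, negN23 j hj, ?_⟩
    rw [f23_neg]

lemma Fn23_eq : Fn 23 = f23 '' (↑A23 ∪ ↑N23) := by
  ext x
  simp only [Fn, Set.mem_setOf_eq, Set.mem_image, Set.mem_union, Finset.mem_coe]
  constructor
  · rintro ⟨i, hi0, hi23, rfl⟩
    refine ⟨(i : ZMod 23), ?_, ?_⟩
    · have hne : (i : ZMod 23) ≠ 0 := by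
        rw [Ne, ZMod.natCast_eq_zero_iff]
        omega
      exact mem_A_or_N _ hne
    · rw [← f23_natCast]
      norm_num
  · rintro ⟨j, hj, rfl⟩
    have hne : j ≠ 0 := by
      rcases hj with hj | hj
      · exact A23_ne_zero j hj
      · exact N23_ne_zero j hj
    refine ⟨j.val, ZMod.val_pos.mpr hne, ZMod.val_lt j, ?_⟩
    · unfold f23
      norm_num

/-- `F₂₃` decomposes into exactly two minimal invariant sets: `O₁` and its negation. -/
theorem F23_decomposition :
    MinimalInvariant O₁ ∧ MinimalInvariant (-O₁) ∧ Disjoint O₁ (-O₁) ∧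
    O₁ ∪ (-O₁) = Fn 23 ∧
    ∀ O ⊆ Fn 23, MinimalInvariant O → O = O₁ ∨ O = -O₁ := by
  have hA2 : ∀ i ∈ A23, 2*i ∈ A23 := by decide
  have hA3 : ∀ i ∈ A23, 3*i ∈ A23 := by decide
  have hAtr : ∀ i ∈ A23, ∀ j ∈ A23, ∃ k ∈ Finset.range 11, 2^k * i = j := by decide
  have hN2 : ∀ i ∈ N23, 2*i ∈ N23 := by decide
  have hN3 : ∀ i ∈ N23, 3*i ∈ N23 := by decide
  have hNtr : ∀ i ∈ N23, ∀ j ∈ N23, ∃ k ∈ Finset.range 11, 2^k * i = j := by decide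
  have hminA : MinimalInvariant O₁ := by
    rw [O₁_eq]; exact minimal_of A23 (by decide) hA2 hA3 hAtr
  have hminN : MinimalInvariant (-O₁) := by
    rw [negO₁_eq]; exact minimal_of N23 (by decide) hN2 hN3 hNtr
  refine ⟨hminA, hminN, ?_, ?_, ?_⟩
  · rw [negO₁_eq, O₁_eq, Set.disjoint_left]
    rintro _ ⟨i, hi, rfl⟩ ⟨j, hj, hji⟩
    exact A23_not_N23 i hi (f23_inj hji ▸ hj)
  · rw [negO₁_eq, O₁_eq, Fn23_eq, ← Set.image_union]
  · intro O hO hmin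
    obtain ⟨⟨x, hx⟩, -, hinv, hOmin⟩ := hmin
    have hx' := hO hx
    rw [Fn23_eq] at hx'
    obtain ⟨i, hi, rfl⟩ := hx'
    rcases hi with hi | hi
    · left
      rw [O₁_eq]
      exact (hOmin _ (subset_of_mem A23 hAtr O hinv i hi hx)
        ⟨f23 i, ⟨i, hi, rfl⟩⟩ (invariant_of A23 hA2 hA3)).symm
    · right
      rw [negO₁_eq]
      exact (hOmin _ (subset_of_mem N23 hNtr O hinv i hi hx)
        ⟨f23 i, ⟨i, hi, rfl⟩⟩ (invariant_of N23 hN2 hN3)).symm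
end
end

section
/- Let x be a real number with 0 < x, let a be the least natural number such that 2^a · x > 1/2, and let b be the least natural number such that 3^b · x > 1/2 (both exist since x > 0). Then |a · Real.log 2 − b · Real.log 3| < Real.log 3. (This is the precise form of the approximate relation b = a · log 3 / log 2 between the horizontal and vertical escape times from a neighborhood of 0 used in the analysis of shadow concentrations.) -/
open MeasureTheory

noncomputable section

/-! Taking logarithms, with `L = log (1/2) - log x` the escape times are the least `a`, `b` with
`L < a log 2` and `L < b log 3`. Either `L < 0` and `a = b = 0`, or minimality puts `a log 2` in
`(L, L + log 2]` and `b log 3` in `(L, L + log 3]`. -/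

theorem lt_pow_mul_iff_log_sub_log_lt {c x t : ℝ} (hc : 0 < c) (hx : 0 < x) (ht : 0 < t) (m : ℕ) :
    t < c ^ m * x ↔ Real.log t - Real.log x < m * Real.log c := by
  rw [← Real.log_lt_log_iff ht (by positivity), Real.log_mul (by positivity) hx.ne', Real.log_pow,
    sub_lt_iff_lt_add]

theorem IsLeast.nat_eq_zero_iff {S : Set ℕ} {m : ℕ} (h : IsLeast S m) : m = 0 ↔ 0 ∈ S :=
  ⟨fun hm => hm ▸ h.1, fun h0 => Nat.le_zero.mp (h.2 h0)⟩

theorem log_bounds_of_isLeast_lt_pow_mul {c x t : ℝ} {m : ℕ} (hc : 0 < c) (hx : 0 < x)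
    (ht : 0 < t) (h : IsLeast {m : ℕ | t < c ^ m * x} m) :
    Real.log t - Real.log x < m * Real.log c ∧
      (0 < m → ((m : ℝ) - 1) * Real.log c ≤ Real.log t - Real.log x) := by
  refine ⟨(lt_pow_mul_iff_log_sub_log_lt hc hx ht m).1 h.1, fun hm => ?_⟩
  have hprev : m - 1 ∉ {m : ℕ | t < c ^ m * x} := fun hmem => by
    have := h.2 hmem
    omega
  rw [Set.mem_ofPred_eq, lt_pow_mul_iff_log_sub_log_lt hc hx ht, not_lt, Nat.cast_pred hm] at hprev
  exact hprev

/-- If `a` and `b` are the least exponents with `2^a·x > 1/2` and `3^b·x > 1/2`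
respectively (for `x > 0`), then `a·log 2` and `b·log 3` differ by less than `log 3`. -/
theorem escape_times_relation (x : ℝ) (hx : 0 < x) (a b : ℕ)
    (ha : IsLeast {m : ℕ | 1 / 2 < (2 : ℝ) ^ m * x} a)
    (hb : IsLeast {m : ℕ | 1 / 2 < (3 : ℝ) ^ m * x} b) :
    |(a : ℝ) * Real.log 2 - (b : ℝ) * Real.log 3| < Real.log 3 := by
  have hlog : Real.log 2 < Real.log 3 := Real.log_lt_log (by norm_num) (by norm_num)
  obtain ⟨ha_lt, ha_le⟩ := log_bounds_of_isLeast_lt_pow_mul two_pos hx one_half_pos ha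
  obtain ⟨hb_lt, hb_le⟩ := log_bounds_of_isLeast_lt_pow_mul three_pos hx one_half_pos hb
  by_cases hx_half : 1 / 2 < x
  · have ha0 : a = 0 := ha.nat_eq_zero_iff.2 (by simpa using hx_half)
    have hb0 : b = 0 := hb.nat_eq_zero_iff.2 (by simpa using hx_half)
    simpa [ha0, hb0] using Real.log_pos (by norm_num : (1 : ℝ) < 3)
  · have ha_pos : 0 < a :=
      Nat.pos_of_ne_zero fun h => hx_half (by simpa using ha.nat_eq_zero_iff.1 h)
    have hb_pos : 0 < b :=
      Nat.pos_of_ne_zero fun h => hx_half (by simpa using hb.nat_eq_zero_iff.1 h)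
    have ha_prev := ha_le ha_pos
    have hb_prev := hb_le hb_pos
    rw [abs_lt]
    constructor <;> linarith
end
end
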